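/- There is a universal constant γ > 0 with the following property. Let G be a finite directed graph on n ≥ 2 vertices obtained by bidirecting a connected undirected graph, with capacities c : E(G) → ℝ≥0, and let β ≥ 1. Suppose that for every nonnegative weight function w on E(G) and every r > 0, there exists an r-bounded β-Lipschitz probability distribution over quasipartitions of the shortest-path quasimetric induced by w on V(G). Then for every x : E(G) → ℝ≥0 whose induced shortest-path quasimetric d_x satisfies Σ_{(u,v) ∈ V(G)×V(G)} d_x(u,v) ≥ 1, there exists a cut S ⊆ E(G) with D(S) ≥ 1 and c(S) ≤ γ·β·(Σ_{e ∈ E(G)} c(e)·x(e))·D(S), where c(S) = Σ_{e ∈ S} c(e) and D(S) is the number of ordered pairs (u,v) of vertices such that every directed path from u to v in G contains an edge of S. In other words, the integrality gap of the LP relaxation of Directed Non-Bipartite Sparsest Cut with uniform demands on G is O(β). -/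

import Mathlib

/-!
Write `d` for the shortest-path quasimetric of `x`, `σ = ∑ d(u,v) ≥ 1`, `n = |V|` and
`τ = σ / 4n²`; it suffices to find a cut `S` with `c(S) · σ ≤ 16 β (∑ c x) D(S)`. Either some
vertex `z` has at least `n / 2` vertices within distance `τ` of it in both directions, or more
than `n² / 4` ordered pairs are at distance `> τ`.

In the first case the triangle inequality through `z` shows that one of the potentials `d(z, ·)`,
`d(·, z)` exceeds `τ` by at least `σ / 4n` in total. Region growing (averaging the level cuts of
that potential over the thresholds `ρ ≥ τ`) gives a level cut whose capacity times this excess is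
at most `(∑ c x)` times the number of vertices beyond `ρ`, and the cut separates each of them
from the ball around `z`.

In the second case an edge `e` is cut by a random quasipartition of the `τ`-bounded `β`-Lipschitz
distribution with probability at most `β x(e) / τ`, so the cheapest quasipartition in its support
cuts edges of capacity at most `β (∑ c x) / τ` and separates every pair at distance `> τ`.
-/

open scoped ENNReal NNReal

noncomputable section

/-- Cost of a walk (given as the list of consecutive vertices visited) under
edge weights `w` (where `w u v = ⊤` encodes the absence of the edge `(u,v)`). -/
def walkCost {V : Type*} (w : V → V → ℝ≥0∞) : List V → ℝ≥0∞
  | [] => 0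
  | [_] => 0
  | a :: b :: l => w a b + walkCost w (b :: l)

/-- Shortest-path quasimetric induced by edge weights `w`:
the infimum of the cost over all walks from `u` to `v` (`⊤` if unreachable). -/
def spDist {V : Type*} (w : V → V → ℝ≥0∞) (u v : V) : ℝ≥0∞ :=
  ⨅ l : { l : List V // l.head? = some u ∧ l.getLast? = some v }, walkCost w l.1

-- Edge weights on the directed graph obtained by bidirecting the undirected graph `H`:
-- the directed edge `(u,v)` exists iff `H.Adj u v`, and carries weight `w (u,v)`.
open Classical in
def graphW {V : Type*} (H : SimpleGraph V) (w : V × V → ℝ≥0) : V → V → ℝ≥0∞ :=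
  fun u v => if H.Adj u v then (w (u, v) : ℝ≥0∞) else ⊤

/-- A quasipartition: a reflexive and transitive relation. -/
def IsQuasipartition {V : Type*} (Q : V → V → Prop) : Prop :=
  (∀ x, Q x x) ∧ ∀ x y z, Q x y → Q y z → Q x z

/-- An `r`-bounded relation with respect to the quasimetric `d`. -/
def IsRBounded {V : Type*} (d : V → V → ℝ≥0∞) (r : ℝ≥0∞) (Q : V → V → Prop) : Prop :=
  ∀ x y, Q x y → d x y ≤ r

/-- The cut `S` (a set of directed edges of the bidirected graph on `H`) separates the
ordered pair `(u,v)`: every directed path from `u` to `v` contains an edge of `S`. -/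
def Separates {V : Type*} (H : SimpleGraph V) (S : Finset (V × V)) (u v : V) : Prop :=
  ∀ p : H.Walk u v, ∃ dd ∈ p.darts, dd.toProd ∈ S

section SpDist

variable {V : Type*} {w : V → V → ℝ≥0∞}

theorem walkCost_append_cons (l₁ : List V) (z : V) (l₂ : List V) :
    walkCost w (l₁ ++ z :: l₂) = walkCost w (l₁ ++ [z]) + walkCost w (z :: l₂) := by
  induction l₁ with
  | nil => simp [walkCost]
  | cons a t ih =>
    cases t with
    | nil => simp [walkCost]
    | cons b t => simp only [List.cons_append, walkCost] at ih ⊢; rw [ih, add_assoc]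

theorem spDist_le_walkCost {u v : V} {l : List V} (hu : l.head? = some u)
    (hv : l.getLast? = some v) : spDist w u v ≤ walkCost w l :=
  iInf_le_of_le ⟨l, hu, hv⟩ le_rfl

theorem spDist_self (u : V) : spDist w u u = 0 :=
  nonpos_iff_eq_zero.1 <| (spDist_le_walkCost (l := [u]) rfl rfl).trans_eq rfl

theorem spDist_le (u v : V) : spDist w u v ≤ w u v := by
  simpa [walkCost] using spDist_le_walkCost (w := w) (l := [u, v]) rfl rfl

theorem spDist_triangle (u v z : V) : spDist w u v ≤ spDist w u z + spDist w z v := by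
  conv_rhs => rw [spDist, spDist, ENNReal.iInf_add]
  refine le_iInf fun ⟨l₁, hu, hz⟩ => ?_
  rw [ENNReal.add_iInf]
  refine le_iInf fun ⟨l₂, hz', hv⟩ => ?_
  obtain ⟨l₁, rfl⟩ := List.getLast?_eq_some_iff.1 hz
  obtain ⟨l₂, rfl⟩ := List.head?_eq_some_iff.1 hz'
  refine (spDist_le_walkCost (l := l₁ ++ z :: l₂) ?_ ?_).trans_eq (walkCost_append_cons ..)
  · cases l₁ <;> simpa using hu
  · simpa [List.getLast?_append] using hv

end SpDist

section GraphDist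

variable {V : Type*} {H : SimpleGraph V} {x : V × V → ℝ≥0}

theorem spDist_graphW_le_of_adj {u v : V} (h : H.Adj u v) :
    spDist (graphW H x) u v ≤ x (u, v) := by
  simpa [graphW, h] using spDist_le (w := graphW H x) u v

theorem spDist_graphW_ne_top_of_reachable {u v : V} (h : H.Reachable u v) :
    spDist (graphW H x) u v ≠ ⊤ := by
  obtain ⟨p⟩ := h
  induction p with
  | nil => simp [spDist_self]
  | cons hadj _ ih =>
    refine ne_top_of_le_ne_top (ENNReal.add_ne_top.2 ⟨?_, ih⟩) (spDist_triangle _ _ _)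
    exact ne_top_of_le_ne_top ENNReal.coe_ne_top (spDist_graphW_le_of_adj hadj)

-- `toNNReal` sends `⊤` to `0`, so this is the shortest-path quasimetric only for connected `H`.
def graphDist (H : SimpleGraph V) (x : V × V → ℝ≥0) (u v : V) : ℝ≥0 :=
  (spDist (graphW H x) u v).toNNReal

theorem coe_graphDist (hH : H.Connected) (u v : V) :
    (graphDist H x u v : ℝ≥0∞) = spDist (graphW H x) u v :=
  ENNReal.coe_toNNReal (spDist_graphW_ne_top_of_reachable (hH u v))

theorem graphDist_triangle (hH : H.Connected) (u v z : V) :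
    graphDist H x u v ≤ graphDist H x u z + graphDist H x z v := by
  rw [← ENNReal.coe_le_coe, ENNReal.coe_add, coe_graphDist hH, coe_graphDist hH,
    coe_graphDist hH]
  exact spDist_triangle u v z

theorem graphDist_le_of_adj {u v : V} (h : H.Adj u v) : graphDist H x u v ≤ x (u, v) :=
  ENNReal.coe_le_coe.1 (ENNReal.coe_toNNReal_le_self.trans (spDist_graphW_le_of_adj h))

end GraphDist

open Finset

section Cuts

variable {V : Type*} {H : SimpleGraph V}

theorem isQuasipartition_imp (P : V → Prop) : IsQuasipartition fun a b => P a → P b :=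
  ⟨fun _ => id, fun _ _ _ h₁ h₂ => h₂ ∘ h₁⟩

theorem IsQuasipartition.rel_of_forall_darts {Q : V → V → Prop} (hQ : IsQuasipartition Q)
    {u v : V} (p : H.Walk u v) (h : ∀ d ∈ p.darts, Q d.fst d.snd) : Q u v := by
  induction p with
  | nil => exact hQ.1 _
  | cons _ p ih =>
    simp only [SimpleGraph.Walk.darts_cons, List.mem_cons, forall_eq_or_imp] at h
    exact hQ.2 _ _ _ h.1 (ih h.2)

variable [Fintype V]

open Classical in
def edgePairs (H : SimpleGraph V) : Finset (V × V) := {p | H.Adj p.1 p.2}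

open Classical in
def cutOf (H : SimpleGraph V) (Q : V → V → Prop) : Finset (V × V) :=
  {p ∈ edgePairs H | ¬ Q p.1 p.2}

def numSeparated (H : SimpleGraph V) (S : Finset (V × V)) : ℕ :=
  {p : V × V | Separates H S p.1 p.2}.ncard

theorem mem_edgePairs {p : V × V} : p ∈ edgePairs H ↔ H.Adj p.1 p.2 := by
  simp [edgePairs]

theorem cutOf_subset_edgePairs (Q : V → V → Prop) : cutOf H Q ⊆ edgePairs H := by
  classical exact filter_subset _ _

theorem separates_cutOf {Q : V → V → Prop} (hQ : IsQuasipartition Q) {u v : V}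
    (huv : ¬ Q u v) : Separates H (cutOf H Q) u v := by
  intro p
  by_contra! h
  refine huv (hQ.rel_of_forall_darts p fun d hd => ?_)
  by_contra hd'
  exact h d hd (by simp [cutOf, edgePairs, d.adj, hd'])

theorem card_le_numSeparated {S F : Finset (V × V)} (hF : ∀ p ∈ F, Separates H S p.1 p.2) :
    #F ≤ numSeparated H S := by
  rw [← Set.ncard_coe_finset]
  exact Set.ncard_le_ncard (fun p hp => hF p hp) (Set.toFinite _)

-- The cheapest cut costs at most the expected cost, which by linearity is at most `∑ c b`.
theorem exists_sum_cutOf_le {m : ℕ} (Q : Fin m → V → V → Prop) (lam : Fin m → ℝ≥0)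
    (hlam : ∑ j, lam j = 1) (c b : V × V → ℝ≥0)
    (hb : ∀ p ∈ edgePairs H, ∑' s : {j // ¬ Q j p.1 p.2}, (lam s.1 : ℝ≥0∞) ≤ b p) :
    ∃ j, ∑ p ∈ cutOf H (Q j), c p ≤ ∑ p ∈ edgePairs H, c p * b p := by
  classical
  have : Nonempty (Fin m) := by
    by_contra h
    simp [not_nonempty_iff.1 h] at hlam
  obtain ⟨j₀, hj₀⟩ := Finite.exists_min fun j => ∑ p ∈ cutOf H (Q j), (c p : ℝ≥0∞)
  refine ⟨j₀, ?_⟩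
  suffices h : ∑ p ∈ cutOf H (Q j₀), (c p : ℝ≥0∞) ≤ ∑ p ∈ edgePairs H, (c p : ℝ≥0∞) * b p by
    exact_mod_cast h
  calc ∑ p ∈ cutOf H (Q j₀), (c p : ℝ≥0∞)
      = ∑ j, lam j * ∑ p ∈ cutOf H (Q j₀), (c p : ℝ≥0∞) := by
        have : ∑ j, (lam j : ℝ≥0∞) = 1 := by exact_mod_cast hlam
        rw [← sum_mul, this, one_mul]
    _ ≤ ∑ j, lam j * ∑ p ∈ cutOf H (Q j), (c p : ℝ≥0∞) :=
        sum_le_sum fun j _ => mul_le_mul_right (hj₀ j) _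
    _ = ∑ p ∈ edgePairs H, c p * ∑' s : {j // ¬ Q j p.1 p.2}, (lam s.1 : ℝ≥0∞) := by
        simp only [cutOf, sum_filter, mul_sum, tsum_fintype]
        rw [sum_comm]
        refine sum_congr rfl fun p _ => ?_
        rw [← sum_subtype {j | ¬ Q j p.1 p.2} (by simp) fun j => (c p : ℝ≥0∞) * lam j, sum_filter]
        simp [mul_comm]
    _ ≤ ∑ p ∈ edgePairs H, (c p : ℝ≥0∞) * b p := by gcongr with p hp; exact hb p hp

end Cuts

section Sweep

open MeasureTheory Set

theorem exists_mem_le_of_setLIntegral_le {α : Type*} [MeasurableSpace α] {μ : Measure α}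
    {s : Set α} {f g : α → ℝ≥0∞} (hs : MeasurableSet s) (hμs : μ s ≠ 0) (hf : Measurable f)
    (hg : ∫⁻ x in s, g x ∂μ ≠ ⊤) (hfg : ∫⁻ x in s, f x ∂μ ≤ ∫⁻ x in s, g x ∂μ) :
    ∃ x ∈ s, f x ≤ g x := by
  by_contra! h
  exact (setLIntegral_strict_mono hs hμs hf hg (ae_of_all _ h)).not_ge hfg

theorem setLIntegral_sum_indicator_Ico_le {ι : Type*} (E : Finset ι) (c len lo hi : ι → ℝ≥0)
    (hlen : ∀ e ∈ E, hi e ≤ lo e + len e) (a b : ℝ) :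
    ∫⁻ ρ in Ico a b, ∑ e ∈ E, c e * (Ico (lo e : ℝ) (hi e)).indicator 1 ρ ≤
      ((∑ e ∈ E, c e * len e : ℝ≥0) : ℝ≥0∞) := by
  push_cast
  rw [lintegral_finsetSum _ fun e _ => (measurable_one.indicator measurableSet_Ico).const_mul _]
  refine sum_le_sum fun e he => ?_
  rw [lintegral_const_mul _ (measurable_one.indicator measurableSet_Ico),
    lintegral_indicator_one measurableSet_Ico, Measure.restrict_apply measurableSet_Ico]
  gcongr
  calc volume (Ico (lo e : ℝ) (hi e) ∩ Ico a b) ≤ volume (Ico (lo e : ℝ) (hi e)) :=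
        measure_mono inter_subset_left
    _ ≤ len e := by
        rw [Real.volume_Ico, ← ENNReal.ofReal_coe_nnreal]
        gcongr
        rw [sub_le_iff_le_add']
        exact_mod_cast hlen e he

theorem setLIntegral_sum_indicator_Iio {V : Type*} [Fintype V] (f : V → ℝ≥0) {a b : ℝ≥0}
    (hb : ∀ v, f v ≤ b) :
    ∫⁻ ρ in Ico (a : ℝ) b, ∑ v, (Iio (f v : ℝ)).indicator 1 ρ = ((∑ v, (f v - a) : ℝ≥0) : ℝ≥0∞) := by
  rw [lintegral_finsetSum _ fun v _ => measurable_one.indicator measurableSet_Iio,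
    ENNReal.ofNNReal_finsetSum]
  refine sum_congr rfl fun v _ => ?_
  rw [lintegral_indicator_one measurableSet_Iio, Measure.restrict_apply measurableSet_Iio,
    inter_comm, Ico_inter_Iio, min_eq_right (by exact_mod_cast hb v), Real.volume_Ico,
    ENNReal.ofReal_sub _ a.coe_nonneg, ENNReal.ofReal_coe_nnreal, ENNReal.ofReal_coe_nnreal,
    ENNReal.coe_sub]

-- Region growing: integrate the capacity of the cut `{e | lo e ≤ ρ < hi e}` and the number of
-- points `f v > ρ` over `ρ ∈ [a, max f)`.
theorem exists_threshold_mul_le {ι V : Type*} [Fintype V] (E : Finset ι)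
    (c len lo hi : ι → ℝ≥0) (hlen : ∀ e ∈ E, hi e ≤ lo e + len e) (f : V → ℝ≥0) {a : ℝ≥0}
    (ha : ∃ v, a < f v) :
    ∃ ρ : ℝ≥0, a ≤ ρ ∧ (∃ v, ρ < f v) ∧
      (∑ e ∈ E with lo e ≤ ρ ∧ ρ < hi e, c e) * ∑ v, (f v - a) ≤
        (∑ e ∈ E, c e * len e) * #{v | ρ < f v} := by
  classical
  obtain ⟨w, -, hw⟩ := exists_max_image univ f (univ_nonempty_iff.2 ⟨ha.choose⟩)
  set L := ∑ e ∈ E, c e * len e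
  set A := ∑ v, (f v - a)
  let cut : ℝ → ℝ≥0∞ := fun ρ => ∑ e ∈ E, c e * (Ico (lo e : ℝ) (hi e)).indicator 1 ρ
  let far : ℝ → ℝ≥0∞ := fun ρ => ∑ v, (Iio (f v : ℝ)).indicator 1 ρ
  have hmeas_cut : Measurable cut :=
    Finset.measurable_sum _ fun e _ => (measurable_one.indicator measurableSet_Ico).const_mul _
  have hmeas_far : Measurable far :=
    Finset.measurable_sum _ fun v _ => measurable_one.indicator measurableSet_Iio
  have hfar : ∫⁻ ρ in Ico (a : ℝ) (f w), far ρ = A :=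
    setLIntegral_sum_indicator_Iio f fun v => hw v (mem_univ v)
  have hvol : volume (Ico (a : ℝ) (f w)) ≠ 0 := by
    rw [Real.volume_Ico, ne_eq, ENNReal.ofReal_eq_zero, not_le, sub_pos]
    exact_mod_cast ha.choose_spec.trans_le (hw _ (mem_univ _))
  have hfin : ∫⁻ ρ in Ico (a : ℝ) (f w), L * far ρ ≠ ⊤ := by
    rw [lintegral_const_mul _ hmeas_far, hfar]
    finiteness
  have hint : ∫⁻ ρ in Ico (a : ℝ) (f w), A * cut ρ ≤ ∫⁻ ρ in Ico (a : ℝ) (f w), L * far ρ := by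
    rw [lintegral_const_mul _ hmeas_cut, lintegral_const_mul _ hmeas_far, hfar, mul_comm]
    gcongr
    exact setLIntegral_sum_indicator_Ico_le E c len lo hi hlen _ _
  obtain ⟨ρ, ⟨haρ, hρw⟩, hρ⟩ :=
    exists_mem_le_of_setLIntegral_le measurableSet_Ico hvol (hmeas_cut.const_mul _) hfin hint
  lift ρ to ℝ≥0 using a.2.trans haρ
  refine ⟨ρ, by exact_mod_cast haρ, ⟨w, by exact_mod_cast hρw⟩, ?_⟩
  have hcut_ρ : cut ρ = ↑(∑ e ∈ E with lo e ≤ ρ ∧ ρ < hi e, c e) := by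
    push_cast [cut, sum_filter]
    refine sum_congr rfl fun e _ => ?_
    split_ifs <;> simp_all
  have hfar_ρ : far ρ = #{v | ρ < f v} := by
    simp [far, indicator_apply]
  rw [hcut_ρ, hfar_ρ, mul_comm] at hρ
  exact_mod_cast hρ

end Sweep

section RegionGrowing

theorem exists_lt_of_sum_tsub_pos {ι : Type*} {s : Finset ι} {f : ι → ℝ≥0} {a : ℝ≥0}
    (h : 0 < ∑ i ∈ s, (f i - a)) : ∃ i, a < f i := by
  obtain ⟨i, -, hi⟩ := exists_lt_of_sum_lt (f := fun _ => (0 : ℝ≥0)) (by simpa using h)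
  exact ⟨i, tsub_pos_iff_lt.1 hi⟩

variable {V : Type*} [Fintype V] {H : SimpleGraph V} {c x : V × V → ℝ≥0}

theorem exists_cut_from_sublevel (f : V → ℝ≥0) (hf : ∀ p ∈ edgePairs H, f p.2 ≤ f p.1 + x p)
    {a : ℝ≥0} (ha : 0 < ∑ v, (f v - a)) :
    ∃ S ⊆ edgePairs H, ∃ F : Finset V, F.Nonempty ∧
      #{u | f u ≤ a} * #F ≤ numSeparated H S ∧
      (∑ p ∈ S, c p) * ∑ v, (f v - a) ≤ (∑ p ∈ edgePairs H, c p * x p) * #F := by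
  obtain ⟨ρ, haρ, ⟨w, hw⟩, hρ⟩ :=
    exists_threshold_mul_le (edgePairs H) c x (fun p => f p.1) (fun p => f p.2) hf f
      (exists_lt_of_sum_tsub_pos ha)
  have hcut : cutOf H (fun u v => f u ≤ ρ → f v ≤ ρ) =
      {p ∈ edgePairs H | f p.1 ≤ ρ ∧ ρ < f p.2} := by
    ext p; simp [cutOf]
  refine ⟨_, cutOf_subset_edgePairs _, ({v | ρ < f v} : Finset V), ⟨w, by simpa⟩, ?_, hcut ▸ hρ⟩
  rw [← card_product]
  refine card_le_numSeparated fun p hp => separates_cutOf (isQuasipartition_imp _) ?_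
  simp only [mem_product, mem_filter_univ] at hp
  exact fun h => (h (hp.1.trans haρ)).not_gt hp.2

theorem exists_cut_into_sublevel (f : V → ℝ≥0) (hf : ∀ p ∈ edgePairs H, f p.1 ≤ f p.2 + x p)
    {a : ℝ≥0} (ha : 0 < ∑ v, (f v - a)) :
    ∃ S ⊆ edgePairs H, ∃ F : Finset V, F.Nonempty ∧
      #F * #{u | f u ≤ a} ≤ numSeparated H S ∧
      (∑ p ∈ S, c p) * ∑ v, (f v - a) ≤ (∑ p ∈ edgePairs H, c p * x p) * #F := by
  obtain ⟨ρ, haρ, ⟨w, hw⟩, hρ⟩ :=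
    exists_threshold_mul_le (edgePairs H) c x (fun p => f p.2) (fun p => f p.1) hf f
      (exists_lt_of_sum_tsub_pos ha)
  have hcut : cutOf H (fun u v => ρ < f u → ρ < f v) =
      {p ∈ edgePairs H | f p.2 ≤ ρ ∧ ρ < f p.1} := by
    ext p; simp [cutOf, and_comm]
  refine ⟨_, cutOf_subset_edgePairs _, ({v | ρ < f v} : Finset V), ⟨w, by simpa⟩, ?_, hcut ▸ hρ⟩
  rw [← card_product]
  refine card_le_numSeparated fun p hp => separates_cutOf (isQuasipartition_imp _) ?_
  simp only [mem_product, mem_filter_univ] at hp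
  exact fun h => (h hp.1).not_ge (hp.2.trans haρ)

end RegionGrowing

-- Double counting: if every ball misses more than `n / 2` vertices, summing over the centres
-- counts each pair outside `R` at most twice.
theorem exists_card_le_two_mul_card_ball_or {V : Type*} [Fintype V] [Nonempty V]
    (R : V → V → Prop) [DecidableRel R] :
    (∃ z, Fintype.card V ≤ 2 * #{v | R z v ∧ R v z}) ∨
      Fintype.card V ^ 2 < 4 * #{p : V × V | ¬ R p.1 p.2} := by
  classical
  set n := Fintype.card V
  set N := #{p : V × V | ¬ R p.1 p.2}
  by_contra! h
  obtain ⟨hball, hN⟩ := h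
  have hout : ∑ z, #{v | ¬ R z v} = N := by
    simp only [N, card_filter, Fintype.sum_prod_type]
  have hin : ∑ z, #{v | ¬ R v z} = N := by
    rw [← hout]
    simp only [card_filter]
    exact sum_comm
  have hz (z : V) : n < 2 * (#{v | ¬ R z v} + #{v | ¬ R v z}) := by
    have h₁ := card_filter_add_card_filter_not (s := univ) fun v => R z v ∧ R v z
    have h₂ : #{v | ¬ (R z v ∧ R v z)} ≤ #{v | ¬ R z v} + #{v | ¬ R v z} :=
      (card_le_card fun v => by simp only [mem_union, mem_filter_univ]; tauto).trans
        (card_union_le _ _)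
    have := hball z
    rw [card_univ] at h₁
    omega
  have : n * n < 2 * (N + N) := calc
    n * n = ∑ _z : V, n := by simp [n]
    _ < ∑ z, 2 * (#{v | ¬ R z v} + #{v | ¬ R v z}) :=
      sum_lt_sum_of_nonempty univ_nonempty fun z _ => hz z
    _ = 2 * (N + N) := by rw [← mul_sum, sum_add_distrib, hout, hin]
  rw [sq] at hN
  omega

def HasLipschitzQuasipartitions {V : Type*} (d : V → V → ℝ≥0∞) (β r : ℝ≥0) : Prop :=
  ∃ (m : ℕ) (Q : Fin m → V → V → Prop) (lam : Fin m → ℝ≥0),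
    (∑ j, lam j = 1) ∧ (∀ j, IsQuasipartition (Q j)) ∧ (∀ j, IsRBounded d r (Q j)) ∧
    ∀ u v : V, (∑' s : { j : Fin m // ¬ Q j u v }, (lam s.1 : ℝ≥0∞)) ≤ β * d u v / r

section SparseCut

variable {V : Type*} [Fintype V] {H : SimpleGraph V} {c x : V × V → ℝ≥0} {d : V → V → ℝ≥0}

theorem sum_dist_le_four_mul_sum_tsub (htri : ∀ u v z, d u v ≤ d u z + d z v) (z : V)
    {τ : ℝ≥0} (hτ : 4 * Fintype.card V ^ 2 * τ ≤ ∑ p : V × V, d p.1 p.2) :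
    ∑ p : V × V, d p.1 p.2 ≤ 4 * Fintype.card V * ∑ v, (d z v - τ) ∨
      ∑ p : V × V, d p.1 p.2 ≤ 4 * Fintype.card V * ∑ v, (d v z - τ) := by
  set n := Fintype.card V
  set σ := ∑ p : V × V, d p.1 p.2
  have hsplit : σ ≤ n * ∑ v, d v z + n * ∑ v, d z v := calc
    σ ≤ ∑ p : V × V, (d p.1 z + d z p.2) := sum_le_sum fun p _ => htri _ _ z
    _ = n * ∑ v, d v z + n * ∑ v, d z v := by
      simp [Fintype.sum_prod_type, sum_add_distrib, mul_sum, n]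
  have htsub (g : V → ℝ≥0) : ∑ v, g v ≤ ∑ v, (g v - τ) + n * τ := calc
    ∑ v, g v ≤ ∑ v, (g v - τ + τ) := sum_le_sum fun _ _ => le_tsub_add
    _ = ∑ v, (g v - τ) + n * τ := by simp [sum_add_distrib, n]
  have hsum : σ ≤ 2 * n * (∑ v, (d z v - τ) + ∑ v, (d v z - τ)) := by
    refine le_of_add_le_add_right (a := σ) ?_
    calc σ + σ ≤ 2 * (n * (∑ v, (d v z - τ) + n * τ) + n * (∑ v, (d z v - τ) + n * τ)) := by
          rw [← two_mul]; gcongr; exact hsplit.trans (by gcongr <;> exact htsub _)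
      _ = 2 * n * (∑ v, (d z v - τ) + ∑ v, (d v z - τ)) + 4 * n ^ 2 * τ := by ring
      _ ≤ 2 * n * (∑ v, (d z v - τ) + ∑ v, (d v z - τ)) + σ := by gcongr
  rcases le_total (∑ v, (d v z - τ)) (∑ v, (d z v - τ)) with hle | hle
  · exact .inl <| hsum.trans <| by
      calc _ ≤ 2 * n * (∑ v, (d z v - τ) + ∑ v, (d z v - τ)) := by gcongr
        _ = _ := by ring
  · exact .inr <| hsum.trans <| by
      calc _ ≤ 2 * n * (∑ v, (d v z - τ) + ∑ v, (d v z - τ)) := by gcongr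
        _ = _ := by ring

theorem exists_cut_of_large_ball [Nonempty V] (htri : ∀ u v z, d u v ≤ d u z + d z v)
    (hdx : ∀ p ∈ edgePairs H, d p.1 p.2 ≤ x p) (z : V) {τ : ℝ≥0}
    (hτ : 4 * Fintype.card V ^ 2 * τ ≤ ∑ p : V × V, d p.1 p.2)
    (hσ : 0 < ∑ p : V × V, d p.1 p.2)
    (hz : Fintype.card V ≤ 2 * #{v | d z v ≤ τ ∧ d v z ≤ τ}) :
    ∃ S ⊆ edgePairs H, 1 ≤ numSeparated H S ∧
      (∑ p ∈ S, c p) * ∑ p : V × V, d p.1 p.2 ≤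
        8 * (∑ p ∈ edgePairs H, c p * x p) * numSeparated H S := by
  set n := Fintype.card V
  set σ := ∑ p : V × V, d p.1 p.2
  set L := ∑ p ∈ edgePairs H, c p * x p
  set B : Finset V := {v | d z v ≤ τ ∧ d v z ≤ τ}
  suffices ∃ S ⊆ edgePairs H, ∃ F : Finset V, ∃ A : ℝ≥0, F.Nonempty ∧
      #B * #F ≤ numSeparated H S ∧ σ ≤ 4 * n * A ∧ (∑ p ∈ S, c p) * A ≤ L * #F by
    obtain ⟨S, hSE, F, A, hF, hD, hA, hS⟩ := this
    have hn : 0 < n := Fintype.card_pos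
    refine ⟨S, hSE, (Nat.mul_pos (by omega) hF.card_pos).trans_le hD, ?_⟩
    calc (∑ p ∈ S, c p) * σ ≤ (∑ p ∈ S, c p) * (4 * n * A) := by gcongr
      _ = 4 * n * ((∑ p ∈ S, c p) * A) := by ring
      _ ≤ 4 * (2 * #B) * (L * #F) := by gcongr; exact_mod_cast hz
      _ = 8 * L * (#B * #F) := by ring
      _ ≤ 8 * L * numSeparated H S := by gcongr; exact_mod_cast hD
  rcases sum_dist_le_four_mul_sum_tsub htri z hτ with hA | hA
  · obtain ⟨S, hSE, F, hF, hD, hS⟩ := exists_cut_from_sublevel (c := c) (x := x) (d z)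
      (fun p hp => (htri z p.2 p.1).trans (by gcongr; exact hdx p hp))
      (pos_of_mul_pos_right (hσ.trans_le hA) zero_le)
    refine ⟨S, hSE, F, _, hF, le_trans ?_ hD, hA, hS⟩
    gcongr
    exact monotone_filter_right _ fun v _ hv => hv.1
  · obtain ⟨S, hSE, F, hF, hD, hS⟩ := exists_cut_into_sublevel (c := c) (x := x) (d · z)
      (fun p hp => (htri p.1 z p.2).trans (by rw [add_comm]; gcongr; exact hdx p hp))
      (pos_of_mul_pos_right (hσ.trans_le hA) zero_le)
    refine ⟨S, hSE, F, _, hF, le_trans ?_ hD, hA, hS⟩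
    rw [mul_comm]
    gcongr
    exact monotone_filter_right _ fun v _ hv => hv.2

theorem exists_cut_of_many_far_pairs (hdx : ∀ p ∈ edgePairs H, d p.1 p.2 ≤ x p) {β τ : ℝ≥0}
    (hτ : 0 < τ) (hστ : ∑ p : V × V, d p.1 p.2 ≤ 4 * Fintype.card V ^ 2 * τ)
    (hfar : Fintype.card V ^ 2 < 4 * #{p : V × V | ¬ d p.1 p.2 ≤ τ})
    (hdec : HasLipschitzQuasipartitions (fun u v => (d u v : ℝ≥0∞)) β τ) :
    ∃ S ⊆ edgePairs H, 1 ≤ numSeparated H S ∧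
      (∑ p ∈ S, c p) * ∑ p : V × V, d p.1 p.2 ≤
        16 * β * (∑ p ∈ edgePairs H, c p * x p) * numSeparated H S := by
  obtain ⟨m, Q, lam, hlam, hQ, hQb, hlip⟩ := hdec
  obtain ⟨j, hj⟩ := exists_sum_cutOf_le (H := H) Q lam hlam c (fun p => β * x p / τ) fun p hp =>
    (hlip p.1 p.2).trans <| by
      rw [ENNReal.coe_div hτ.ne', ENNReal.coe_mul]
      gcongr
      exact ENNReal.coe_le_coe.2 (hdx p hp)
  set N : Finset (V × V) := {p | ¬ d p.1 p.2 ≤ τ}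
  set L := ∑ p ∈ edgePairs H, c p * x p
  have hD : #N ≤ numSeparated H (cutOf H (Q j)) :=
    card_le_numSeparated fun p hp => separates_cutOf (hQ j) fun hq =>
      (mem_filter.1 hp).2 (ENNReal.coe_le_coe.1 (hQb j _ _ hq))
  have hcost : (∑ p ∈ cutOf H (Q j), c p) * τ ≤ β * L := by
    rw [← le_div_iff₀ hτ]
    refine hj.trans_eq ?_
    rw [mul_sum, sum_div]
    exact sum_congr rfl fun p _ => by ring
  refine ⟨_, cutOf_subset_edgePairs _, (by omega : 1 ≤ #N).trans hD, ?_⟩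
  calc (∑ p ∈ cutOf H (Q j), c p) * ∑ p : V × V, d p.1 p.2
      ≤ (∑ p ∈ cutOf H (Q j), c p) * (4 * Fintype.card V ^ 2 * τ) := by gcongr
    _ = 4 * Fintype.card V ^ 2 * ((∑ p ∈ cutOf H (Q j), c p) * τ) := by ring
    _ ≤ 4 * (4 * #N) * (β * L) := by gcongr; exact_mod_cast hfar.le
    _ = 16 * β * L * #N := by ring
    _ ≤ 16 * β * L * numSeparated H (cutOf H (Q j)) := by gcongr

theorem exists_sparse_cut [Nonempty V] (htri : ∀ u v z, d u v ≤ d u z + d z v)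
    (hdx : ∀ p ∈ edgePairs H, d p.1 p.2 ≤ x p) {β : ℝ≥0} (hβ : 1 ≤ β)
    (hσ : 0 < ∑ p : V × V, d p.1 p.2)
    (hdec : HasLipschitzQuasipartitions (fun u v => (d u v : ℝ≥0∞)) β
      ((∑ p : V × V, d p.1 p.2) / (4 * Fintype.card V ^ 2))) :
    ∃ S ⊆ edgePairs H, 1 ≤ numSeparated H S ∧
      (∑ p ∈ S, c p) * ∑ p : V × V, d p.1 p.2 ≤
        16 * β * (∑ p ∈ edgePairs H, c p * x p) * numSeparated H S := by
  have hn : (0 : ℝ≥0) < 4 * Fintype.card V ^ 2 := by positivity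
  set τ := (∑ p : V × V, d p.1 p.2) / (4 * Fintype.card V ^ 2)
  have hτ : 4 * Fintype.card V ^ 2 * τ = ∑ p : V × V, d p.1 p.2 := mul_div_cancel₀ _ hn.ne'
  rcases exists_card_le_two_mul_card_ball_or fun u v => d u v ≤ τ with ⟨z, hz⟩ | hfar
  · obtain ⟨S, hSE, hD, hS⟩ := exists_cut_of_large_ball (c := c) htri hdx z hτ.le hσ hz
    refine ⟨S, hSE, hD, hS.trans ?_⟩
    calc _ = 8 * 1 * (∑ p ∈ edgePairs H, c p * x p) * numSeparated H S := by rw [mul_one]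
      _ ≤ _ := by gcongr; norm_num
  · exact exists_cut_of_many_far_pairs hdx (div_pos hσ hn) hτ.ge hfar hdec

end SparseCut

open Classical in
/-- LP rounding for Directed Non-Bipartite Sparsest Cut with uniform demands: if every
shortest-path quasimetric on the bidirected graph `G` (of an `n ≥ 2`-vertex connected
undirected graph `H`) admits, at every scale `r > 0`, an `r`-bounded `β`-Lipschitz
distribution over quasipartitions, then the integrality gap of the LP relaxation is
`O(β)`: any fractional solution `x` with `Σ_{(u,v)} d_x(u,v) ≥ 1` yields a cut `S` with
`c(S) ≤ γ·β·(Σ_e c(e)x(e))·D(S)` and `D(S) ≥ 1`. -/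
theorem stmt14 :
    ∃ γ : ℝ≥0, 0 < γ ∧
      ∀ (V : Type) [Fintype V], 2 ≤ Fintype.card V →
        ∀ (H : SimpleGraph V), H.Connected →
          ∀ (c : V × V → ℝ≥0) (β : ℝ≥0), 1 ≤ β →
            (∀ (w : V × V → ℝ≥0) (r : ℝ≥0), 0 < r →
              ∃ (m : ℕ) (Q : Fin m → V → V → Prop) (lam : Fin m → ℝ≥0),
                (∑ j, lam j = 1) ∧
                (∀ j, IsQuasipartition (Q j)) ∧
                (∀ j, IsRBounded (spDist (graphW H w)) (r : ℝ≥0∞) (Q j)) ∧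
                ∀ u v : V,
                  (∑' s : { j : Fin m // ¬ Q j u v }, (lam s.1 : ℝ≥0∞))
                    ≤ (β : ℝ≥0∞) * spDist (graphW H w) u v / (r : ℝ≥0∞)) →
            ∀ x : V × V → ℝ≥0,
              1 ≤ ∑ p : V × V, spDist (graphW H x) p.1 p.2 →
              ∃ S : Finset (V × V),
                (∀ p ∈ S, H.Adj p.1 p.2) ∧
                1 ≤ {p : V × V | Separates H S p.1 p.2}.ncard ∧
                (∑ p ∈ S, c p) ≤
                  γ * β * (∑ p : V × V, if H.Adj p.1 p.2 then c p * x p else 0) *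
                    ({p : V × V | Separates H S p.1 p.2}.ncard : ℝ≥0) := by
  refine ⟨16, by norm_num, fun V _ hV H hH c β hβ horacle x hx => ?_⟩
  have : Nonempty V := Fintype.card_pos_iff.1 (by omega)
  have hcoe : (fun u v => (graphDist H x u v : ℝ≥0∞)) = spDist (graphW H x) :=
    funext₂ (coe_graphDist hH)
  have hσ : 1 ≤ ∑ p : V × V, graphDist H x p.1 p.2 := by
    simp only [← coe_graphDist hH] at hx
    exact_mod_cast hx
  obtain ⟨S, hSE, hD, hS⟩ := exists_sparse_cut (c := c) (graphDist_triangle hH)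
    (fun p hp => graphDist_le_of_adj (mem_edgePairs.1 hp)) hβ (zero_lt_one.trans_le hσ)
    (hcoe ▸ horacle x _ (div_pos (zero_lt_one.trans_le hσ) (by positivity)))
  refine ⟨S, fun p hp => mem_edgePairs.1 (hSE hp), hD, ?_⟩
  rw [← sum_filter]
  exact (le_mul_of_one_le_right' hσ).trans hS
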